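/- The Polish G-group (H,G) is not nm-stable: for a ∈ H given by a(i,j) = 1 iff j = 0, one has NM(a/∅) = ∞, i.e., NM(a/∅) ≥ α for every ordinal α. -/

import Mathlib

open scoped ENNReal

/-- The weight of a point `(i,j) ∈ ℕ × ℕ`: `2 · 3^{-(i+1)}`. -/
noncomputable def wt (p : ℕ × ℕ) : ℝ≥0∞ := 2 * ((3 : ℝ≥0∞) ^ (p.1 + 1))⁻¹

/-- `‖S‖ = Σ_{(i,j) ∈ S} 2 · 3^{-(i+1)} ∈ [0,∞]` for `S ⊆ ℕ × ℕ`. -/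
noncomputable def nrmS (S : Set (ℕ × ℕ)) : ℝ≥0∞ := ∑' p, S.indicator wt p

lemma nrmS_mono {S T : Set (ℕ × ℕ)} (h : S ⊆ T) : nrmS S ≤ nrmS T :=
  ENNReal.tsum_le_tsum fun p =>
    Set.indicator_le_indicator_of_subset h (fun _ => zero_le ..) p

lemma nrmS_union_le (S T : Set (ℕ × ℕ)) : nrmS (S ∪ T) ≤ nrmS S + nrmS T := by
  rw [nrmS, nrmS, nrmS, ← ENNReal.tsum_add]
  refine ENNReal.tsum_le_tsum fun p => ?_
  by_cases hS : p ∈ S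
  · refine le_trans ?_ (le_add_right le_rfl)
    rw [Set.indicator_of_mem (Set.mem_union_left _ hS), Set.indicator_of_mem hS]
  · by_cases hT : p ∈ T
    · refine le_trans ?_ (le_add_left le_rfl)
      rw [Set.indicator_of_mem (Set.mem_union_right _ hT), Set.indicator_of_mem hT]
    · rw [Set.indicator_of_notMem (fun hc => hc.elim hS hT)]
      exact zero_le ..

lemma nrmS_empty : nrmS ∅ = 0 := by simp [nrmS]

/-- The support of `z : ℕ × ℕ → ZMod 2`. -/
def suppZ (z : ℕ × ℕ → ZMod 2) : Set (ℕ × ℕ) := {p | z p = 1}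

/-- `‖z‖` for `z : ℕ × ℕ → ZMod 2`. -/
noncomputable def nrmZ (z : ℕ × ℕ → ZMod 2) : ℝ≥0∞ := nrmS (suppZ z)

/-- `H = {z : ℕ × ℕ → ZMod 2 | ‖z‖ < ∞}`, as an (additive) subgroup of the product group
`ℕ × ℕ → ZMod 2` with pointwise addition mod 2. -/
noncomputable def Hgrp : AddSubgroup ((ℕ × ℕ) → ZMod 2) where
  carrier := {z | nrmZ z < ⊤}
  zero_mem' := by
    have h : suppZ 0 = ∅ := by ext p; simp [suppZ]
    simp [nrmZ, h, nrmS_empty]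
  add_mem' {z w} hz hw := by
    have hsub : suppZ (z + w) ⊆ suppZ z ∪ suppZ w := by
      intro p hp
      by_contra hc
      simp only [Set.mem_union, suppZ, Set.mem_setOf_eq, not_or] at hc
      have hdi : ∀ x : ZMod 2, x = 0 ∨ x = 1 := by decide
      have hz0 : z p = 0 := (hdi (z p)).resolve_right hc.1
      have hw0 : w p = 0 := (hdi (w p)).resolve_right hc.2
      have hp' : (z + w) p = 1 := hp
      rw [Pi.add_apply, hz0, hw0] at hp'
      exact absurd hp' (by decide)
    calc nrmZ (z + w) ≤ nrmS (suppZ z ∪ suppZ w) := nrmS_mono hsub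
      _ ≤ nrmZ z + nrmZ w := nrmS_union_le _ _
      _ < ⊤ := ENNReal.add_lt_top.2 ⟨hz, hw⟩
  neg_mem' {z} hz := by
    have h : suppZ (-z) = suppZ z := by
      ext p; simp [suppZ, CharTwo.neg_eq]
    simpa [nrmZ, h] using hz
/-- `φ(x) = Σ_i 2 · x i · 3^{-(i+1)}`, the standard map from `2^ℕ` onto the ternary Cantor
set (values of `x` read as `0, 1` in `ℝ`). -/
noncomputable def phiC (x : ℕ → ZMod 2) : ℝ :=
  ∑' i, 2 * ((x i).val : ℝ) * ((3 : ℝ) ^ (i + 1))⁻¹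

/-- The metric on `H`: `d_H(z,w) = Σ_j |φ(z(·,j)) − φ(w(·,j))|`, the `ℓ¹`-distance between
the corresponding points of `C^ℕ ∩ ℓ¹`. -/
noncomputable def dH (z w : ↥Hgrp) : ℝ :=
  ∑' j, |phiC (fun i => (z : (ℕ × ℕ) → ZMod 2) (i, j)) -
          phiC (fun i => (w : (ℕ × ℕ) → ZMod 2) (i, j))|

/-- The support of a permutation `g` of `ℕ × ℕ`. -/
def suppP (g : Equiv.Perm (ℕ × ℕ)) : Set (ℕ × ℕ) := {p | g p ≠ p}

lemma suppP_inv (g : Equiv.Perm (ℕ × ℕ)) : suppP g⁻¹ = suppP g := by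
  ext p
  simp only [suppP, Set.mem_setOf_eq, ne_eq]
  constructor
  · intro h hc
    exact h (by conv_lhs => rw [← hc]; simp)
  · intro h hc
    exact h (by conv_lhs => rw [← hc]; simp)

/-- `G = {g ∈ Sym(ℕ × ℕ) | ‖supp g‖ < ∞}`, as a subgroup of the symmetric group of
`ℕ × ℕ`. -/
noncomputable def Ggrp : Subgroup (Equiv.Perm (ℕ × ℕ)) where
  carrier := {g | nrmS (suppP g) < ⊤}
  one_mem' := by
    have h : suppP 1 = ∅ := by ext p; simp [suppP]
    simp [h, nrmS_empty]
  mul_mem' {f g} hf hg := by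
    have hsub : suppP (f * g) ⊆ suppP f ∪ suppP g := by
      intro p hp
      by_contra hc
      simp only [Set.mem_union, suppP, Set.mem_setOf_eq, ne_eq, not_or, not_not] at hc
      exact hp (by simp only [suppP, Set.mem_setOf_eq, Equiv.Perm.mul_apply, hc.2, hc.1] at *)
    calc nrmS (suppP (f * g)) ≤ nrmS (suppP f ∪ suppP g) := nrmS_mono hsub
      _ ≤ nrmS (suppP f) + nrmS (suppP g) := nrmS_union_le _ _
      _ < ⊤ := ENNReal.add_lt_top.2 ⟨hf, hg⟩
  inv_mem' {g} hg := by simpa [suppP_inv] using hg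

/-- The metric on `G`: `d(f,g) = ‖supp (f⁻¹ ∘ g)‖`. -/
noncomputable def dG (f g : ↥Ggrp) : ℝ :=
  (nrmS (suppP ((f : Equiv.Perm (ℕ × ℕ))⁻¹ * (g : Equiv.Perm (ℕ × ℕ))))).toReal

/-- The action of `G` on `H`: `g • h = h ∘ g⁻¹`. -/
noncomputable def actGH (g : ↥Ggrp) (h : ↥Hgrp) : ↥Hgrp :=
  ⟨fun p => (h : (ℕ × ℕ) → ZMod 2) (((g : Equiv.Perm (ℕ × ℕ)))⁻¹ p), by
    have hsub : suppZ (fun p => (h : (ℕ × ℕ) → ZMod 2) (((g : Equiv.Perm (ℕ × ℕ)))⁻¹ p)) ⊆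
        suppZ (h : (ℕ × ℕ) → ZMod 2) ∪ suppP (g : Equiv.Perm (ℕ × ℕ)) := by
      intro p hp
      by_cases hgp : ((g : Equiv.Perm (ℕ × ℕ)))⁻¹ p = p
      · left
        have : (h : (ℕ × ℕ) → ZMod 2) (((g : Equiv.Perm (ℕ × ℕ)))⁻¹ p) = 1 := hp
        rwa [hgp] at this
      · right
        have : p ∈ suppP ((g : Equiv.Perm (ℕ × ℕ)))⁻¹ := hgp
        rwa [suppP_inv] at this
    show nrmZ _ < ⊤
    calc nrmZ _ ≤ nrmS (suppZ (h : (ℕ × ℕ) → ZMod 2) ∪ suppP (g : Equiv.Perm (ℕ × ℕ))) :=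
          nrmS_mono hsub
      _ ≤ nrmZ (h : (ℕ × ℕ) → ZMod 2) + nrmS (suppP (g : Equiv.Perm (ℕ × ℕ))) :=
          nrmS_union_le _ _
      _ < ⊤ := ENNReal.add_lt_top.2 ⟨h.2, g.2⟩⟩
def colEquiv (c : ℕ) : ℕ ≃ {p : ℕ × ℕ | p.2 = c} where
  toFun := fun i => ⟨(i, c), rfl⟩
  invFun := fun p => p.1.1
  left_inv := fun _ => rfl
  right_inv := fun p => Subtype.ext (Prod.ext rfl p.2.symm)

lemma nrmS_column_lt_top (c : ℕ) : nrmS {p : ℕ × ℕ | p.2 = c} < ⊤ := by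
  set e := colEquiv c with he
  have h0 : nrmS {p : ℕ × ℕ | p.2 = c} = ∑' i : ℕ, wt ((e i : ℕ × ℕ)) := by
    rw [nrmS, ← tsum_subtype]
    exact (Equiv.tsum_eq e fun p => wt (p : ℕ × ℕ)).symm
  have h1 : nrmS {p : ℕ × ℕ | p.2 = c} = ∑' i : ℕ, wt (i, c) := h0
  rw [h1]
  have h2 : ∀ i : ℕ, wt (i, c) = ((3 : ℝ≥0∞)⁻¹) ^ i * (2 * 3⁻¹) := by
    intro i
    rw [wt, pow_succ, ENNReal.mul_inv (Or.inr (by norm_num)) (Or.inr (by norm_num)),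
      ← ENNReal.inv_pow]
    ring
  simp_rw [h2]
  rw [ENNReal.tsum_mul_right, ENNReal.tsum_geometric]
  refine ENNReal.mul_lt_top ?_ ?_
  · rw [lt_top_iff_ne_top]
    refine ENNReal.inv_ne_top.2 ?_
    rw [ne_eq, tsub_eq_zero_iff_le, not_le]
    exact ENNReal.inv_lt_one.2 (by norm_num)
  · exact ENNReal.mul_lt_top (by norm_num) (by simp [ENNReal.inv_lt_top])

/-- The topology on `G` induced by the metric `d`: the topology generated by the open balls
of `d`. -/
noncomputable def tG : TopologicalSpace ↥Ggrp :=
  TopologicalSpace.generateFrom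
    {s | ∃ (f : ↥Ggrp) (ε : ℝ), 0 < ε ∧ s = {g : ↥Ggrp | dG f g < ε}}

/-- The topology on `H` induced by the metric `d_H`: the topology generated by the open
balls of `d_H`. -/
noncomputable def tH : TopologicalSpace ↥Hgrp :=
  TopologicalSpace.generateFrom
    {s | ∃ (z : ↥Hgrp) (ε : ℝ), 0 < ε ∧ s = {w : ↥Hgrp | dH z w < ε}}

/-- The element `a ∈ H` given by `a (i,j) = 1` iff `j = 0`. -/
noncomputable def aElt : ↥Hgrp :=
  ⟨fun p => if p.2 = 0 then 1 else 0, by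
    show nrmZ _ < ⊤
    refine lt_of_le_of_lt (nrmS_mono ?_) (nrmS_column_lt_top 0)
    intro p hp
    by_contra hc
    simp only [suppZ, Set.mem_setOf_eq] at hp
    rw [if_neg (show ¬ p.2 = 0 from hc)] at hp
    exact absurd hp (by decide)⟩

/-- The element `b_n ∈ H` given by `b_n (i,j) = 1` iff `j = n + 1`. -/
noncomputable def bElt (n : ℕ) : ↥Hgrp :=
  ⟨fun p => if p.2 = n + 1 then 1 else 0, by
    show nrmZ _ < ⊤
    refine lt_of_le_of_lt (nrmS_mono ?_) (nrmS_column_lt_top (n + 1))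
    intro p hp
    by_contra hc
    simp only [suppZ, Set.mem_setOf_eq] at hp
    rw [if_neg (show ¬ p.2 = n + 1 from hc)] at hp
    exact absurd hp (by decide)⟩

/-- The set `{b_0, …, b_{n-1}} ⊆ H`. -/
noncomputable def bSet (n : ℕ) : Set ↥Hgrp := {x | ∃ k < n, x = bElt k}

lemma actGH_one (h : ↥Hgrp) : actGH 1 h = h := by
  apply Subtype.ext
  funext p
  show (h : (ℕ × ℕ) → ZMod 2) (((1 : Equiv.Perm (ℕ × ℕ)))⁻¹ p) = _
  simp

lemma actGH_mul (g₁ g₂ : ↥Ggrp) (h : ↥Hgrp) :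
    actGH (g₁ * g₂) h = actGH g₁ (actGH g₂ h) := by
  apply Subtype.ext
  funext p
  show (h : (ℕ × ℕ) → ZMod 2) (((g₁ : Equiv.Perm (ℕ × ℕ)) * (g₂ : Equiv.Perm (ℕ × ℕ)))⁻¹ p)
      = (h : (ℕ × ℕ) → ZMod 2) ((g₂ : Equiv.Perm (ℕ × ℕ))⁻¹ ((g₁ : Equiv.Perm (ℕ × ℕ))⁻¹ p))
  rw [mul_inv_rev, Equiv.Perm.mul_apply]

/-- The pointwise stabilizer `G_C ≤ G` of a set `C ⊆ H`. -/
noncomputable def fixH (C : Set ↥Hgrp) : Subgroup ↥Ggrp where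
  carrier := {g | ∀ c ∈ C, actGH g c = c}
  one_mem' := fun c _ => actGH_one c
  mul_mem' {g₁ g₂} h₁ h₂ := fun c hc => by rw [actGH_mul, h₂ c hc, h₁ c hc]
  inv_mem' {g} hg := fun c hc => by
    conv_lhs => rw [← hg c hc]
    rw [← actGH_mul, inv_mul_cancel, actGH_one]

/-- The orbit `o(a/C)` of `a ∈ H` under the pointwise stabilizer `G_C`. -/
noncomputable def orbitOverH (C : Set ↥Hgrp) (a : ↥Hgrp) : Set ↥Hgrp :=
  {x | ∃ g ∈ fixH C, actGH g a = x}

/-- `a ⫝_A B` in `(H,G)`: the set of those `g ∈ G_A` with `g • a ∈ o(a/A ∪ B)` is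
non-meager in `G_A` (with the subspace topology from the metric topology of `G`). -/
noncomputable def NMIndepH (a : ↥Hgrp) (A B : Set ↥Hgrp) : Prop :=
  ¬ @IsMeagre ↥(fixH A) (@instTopologicalSpaceSubtype ↥Ggrp _ tG)
      {g : ↥(fixH A) | actGH (g : ↥Ggrp) a ∈ orbitOverH (A ∪ B) a}

/-- `NM(a/A) ≥ α` in `(H,G)`, defined by recursion on the ordinal `α`: `NM(a/A) ≥ 0` always
holds, `NM(a/A) ≥ α + 1` iff there is a finite `B` with `A ⊆ B ⊆ H` such that `a` is
nm-dependent on `B` over `A` and `NM(a/B) ≥ α`, and for limit `λ`, `NM(a/A) ≥ λ` iff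
`NM(a/A) ≥ α` for all `α < λ`. -/
noncomputable def NMgeH (a : ↥Hgrp) (α : Ordinal) : Set ↥Hgrp → Prop :=
  Ordinal.limitRecOn α (fun _ => True)
    (fun _ ih A => ∃ B : Set ↥Hgrp, A ⊆ B ∧ B.Finite ∧ ¬ NMIndepH a A B ∧ ih B)
    (fun o _ ih A => ∀ β (hβ : β < o), ih β hβ A)

/-! Write `b_k` for the indicator of column `k + 1` and `hit_n` for the set of `g ∈ G` that map
some point of column `0` into column `n + 1`. If `g • a = h • a` with `h` fixing `b_n`, then `g`
maps column `0` (the support of `a`) away from column `n + 1` (the support of `b_n`), so the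
relevant set in the definition of `a ⫝_{b_0,…,b_{n-1}} b_n` misses `hit_n`. Now `hit_n` is open,
since `d(f, g) < wt p` forces `f p = g p`, and it is dense in `G_{b_0,…,b_{n-1}}`: composing with
a transposition of two points of small weight, one in column `0` and one in the `f`-preimage of
column `n + 1`, moves any `f` into `hit_n`. Hence `a` is nm-dependent on `b_n` over
`b_0, …, b_{n-1}` for every `n`, and the chain `∅ ⊆ {b_0} ⊆ {b_0, b_1} ⊆ ⋯` witnesses
`NM(a/∅) ≥ α` by induction on `α`. -/

open Equiv

section Weights

lemma wt_ne_top (p : ℕ × ℕ) : wt p ≠ ⊤ :=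
  ENNReal.mul_ne_top (by norm_num) (ENNReal.inv_ne_top.2 (by positivity))

lemma wt_ne_zero (p : ℕ × ℕ) : wt p ≠ 0 :=
  mul_ne_zero two_ne_zero (ENNReal.inv_ne_zero.2 (ENNReal.pow_ne_top (by norm_num)))

lemma nrmS_eq_tsum_subtype (S : Set (ℕ × ℕ)) : nrmS S = ∑' p : S, wt p :=
  (tsum_subtype S wt).symm

lemma wt_le_nrmS {p : ℕ × ℕ} {S : Set (ℕ × ℕ)} (hp : p ∈ S) : wt p ≤ nrmS S := by
  have h := ENNReal.le_tsum (f := S.indicator wt) p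
  rwa [Set.indicator_of_mem hp] at h

lemma nrmS_singleton (p : ℕ × ℕ) : nrmS {p} = wt p := by
  rw [nrmS_eq_tsum_subtype, tsum_singleton]

lemma exists_mem_wt_lt {T : Set (ℕ × ℕ)} (hT : nrmS T ≠ ⊤) (hinf : T.Infinite) {δ : ℝ≥0∞}
    (hδ : δ ≠ 0) : ∃ p ∈ T, wt p < δ := by
  by_contra! h
  have : Infinite T := hinf.to_subtype
  refine hT (top_le_iff.1 ?_)
  calc ⊤ = ∑' _ : T, δ := (ENNReal.tsum_const_eq_top_of_ne_zero hδ).symm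
    _ ≤ ∑' p : T, wt p := ENNReal.tsum_le_tsum fun p => h p p.2
    _ = nrmS T := (nrmS_eq_tsum_subtype T).symm

lemma column_infinite (c : ℕ) : {p : ℕ × ℕ | p.2 = c}.Infinite :=
  Set.infinite_of_injective_forall_mem (f := fun i => (i, c))
    (fun _ _ h => (Prod.mk.inj h).1) fun _ => rfl

end Weights

section Permutations

lemma preimage_subset_suppP_union (f : Perm (ℕ × ℕ)) (S : Set (ℕ × ℕ)) :
    f ⁻¹' S ⊆ suppP f ∪ S := by
  intro p hp
  by_cases hfp : f p = p
  · exact Or.inr (hfp ▸ hp)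
  · exact Or.inl hfp

lemma nrmS_preimage_lt_top (g : ↥Ggrp) {S : Set (ℕ × ℕ)} (hS : nrmS S < ⊤) :
    nrmS ((g : Perm (ℕ × ℕ)) ⁻¹' S) < ⊤ :=
  (nrmS_mono (preimage_subset_suppP_union _ S)).trans_lt
    ((nrmS_union_le _ _).trans_lt (ENNReal.add_lt_top.2 ⟨g.2, hS⟩))

lemma suppP_swap_subset (p q : ℕ × ℕ) : suppP (swap p q) ⊆ {p} ∪ {q} := by
  intro r hr
  by_contra h
  simp only [Set.mem_union, Set.mem_singleton_iff, not_or] at h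
  exact hr (swap_apply_of_ne_of_ne h.1 h.2)

lemma nrmS_suppP_swap_le (p q : ℕ × ℕ) : nrmS (suppP (swap p q)) ≤ wt p + wt q := by
  calc nrmS (suppP (swap p q)) ≤ nrmS ({p} ∪ {q}) := nrmS_mono (suppP_swap_subset p q)
    _ ≤ nrmS {p} + nrmS {q} := nrmS_union_le _ _
    _ = wt p + wt q := by rw [nrmS_singleton, nrmS_singleton]

lemma suppP_mul_subset (u v : Perm (ℕ × ℕ)) : suppP (u * v) ⊆ suppP u ∪ suppP v := by
  intro p hp
  by_contra hc
  rw [Set.mem_union, not_or] at hc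
  have hu : u p = p := of_not_not hc.1
  have hv : v p = p := of_not_not hc.2
  exact hp (by rw [Perm.mul_apply, hv, hu])

noncomputable def swapG (p q : ℕ × ℕ) : ↥Ggrp :=
  ⟨swap p q, (nrmS_suppP_swap_le p q).trans_lt
    (ENNReal.add_lt_top.2 ⟨(wt_ne_top p).lt_top, (wt_ne_top q).lt_top⟩)⟩

end Permutations

section Action

lemma actGH_apply (g : ↥Ggrp) (h : ↥Hgrp) (p : ℕ × ℕ) :
    (actGH g h : (ℕ × ℕ) → ZMod 2) p = (h : (ℕ × ℕ) → ZMod 2) ((g : Perm (ℕ × ℕ))⁻¹ p) :=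
  rfl

lemma aElt_apply (p : ℕ × ℕ) :
    (aElt : (ℕ × ℕ) → ZMod 2) p = if p.2 = 0 then 1 else 0 :=
  rfl

lemma bElt_apply (k : ℕ) (p : ℕ × ℕ) :
    (bElt k : (ℕ × ℕ) → ZMod 2) p = if p.2 = k + 1 then 1 else 0 :=
  rfl

lemma apply_inv_of_mem_fixH {C : Set ↥Hgrp} {g : ↥Ggrp} (hg : g ∈ fixH C) {c : ↥Hgrp}
    (hc : c ∈ C) (p : ℕ × ℕ) :
    (c : (ℕ × ℕ) → ZMod 2) ((g : Perm (ℕ × ℕ))⁻¹ p) = (c : (ℕ × ℕ) → ZMod 2) p :=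
  congrFun (congrArg Subtype.val (hg c hc)) p

lemma swapG_mem_fixH {C : Set ↥Hgrp} {p q : ℕ × ℕ}
    (h : ∀ c ∈ C, (c : (ℕ × ℕ) → ZMod 2) p = (c : (ℕ × ℕ) → ZMod 2) q) :
    swapG p q ∈ fixH C := by
  intro c hc
  ext r
  change (c : (ℕ × ℕ) → ZMod 2) ((swap p q)⁻¹ r) = (c : (ℕ × ℕ) → ZMod 2) r
  rw [swap_inv, swap_apply_def]
  split_ifs with hp hq
  · rw [hp, h c hc]
  · rw [hq, h c hc]
  · rfl

end Action

section Topology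

attribute [local instance] tG

lemma dG_self (f : ↥Ggrp) : dG f f = 0 := by
  simp [dG, suppP, nrmS_empty]

lemma dG_triangle (f g h : ↥Ggrp) : dG f h ≤ dG f g + dG g h := by
  have hfg : nrmS (suppP ((f : Perm (ℕ × ℕ))⁻¹ * g)) ≠ ⊤ := (f⁻¹ * g).2.ne
  have hgh : nrmS (suppP ((g : Perm (ℕ × ℕ))⁻¹ * h)) ≠ ⊤ := (g⁻¹ * h).2.ne
  have hfh : (f : Perm (ℕ × ℕ))⁻¹ * h = ((f : Perm (ℕ × ℕ))⁻¹ * g) * ((g : Perm (ℕ × ℕ))⁻¹ * h) :=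
    by group
  rw [dG, dG, dG, ← ENNReal.toReal_add hfg hgh]
  exact ENNReal.toReal_mono (ENNReal.add_ne_top.2 ⟨hfg, hgh⟩)
    (hfh ▸ (nrmS_mono (suppP_mul_subset _ _)).trans (nrmS_union_le _ _))

lemma dG_mul_right (f s : ↥Ggrp) : dG f (f * s) = (nrmS (suppP (s : Perm (ℕ × ℕ)))).toReal := by
  rw [dG, Subgroup.coe_mul, inv_mul_cancel_left]

lemma apply_eq_of_dG_lt_wt {f g : ↥Ggrp} {p : ℕ × ℕ} (h : dG f g < (wt p).toReal) :
    (g : Perm (ℕ × ℕ)) p = (f : Perm (ℕ × ℕ)) p := by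
  by_contra hne
  have hp : p ∈ suppP ((f : Perm (ℕ × ℕ))⁻¹ * g) := fun hfix =>
    hne (Perm.inv_eq_iff_eq.1 hfix)
  exact h.not_ge (ENNReal.toReal_mono (f⁻¹ * g).2.ne (wt_le_nrmS hp))

lemma isOpen_ball_dG (f : ↥Ggrp) {ε : ℝ} (hε : 0 < ε) : IsOpen {g | dG f g < ε} :=
  TopologicalSpace.GenerateOpen.basic _ ⟨f, ε, hε, rfl⟩

lemma exists_ball_subset_of_isOpen {V : Set ↥Ggrp} (hV : IsOpen V) :
    ∀ f ∈ V, ∃ ε > 0, {g | dG f g < ε} ⊆ V := by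
  induction hV with
  | basic s hs =>
    obtain ⟨c, δ, -, rfl⟩ := hs
    intro f (hf : dG c f < δ)
    refine ⟨δ - dG c f, sub_pos.2 hf, fun g (hg : dG f g < δ - dG c f) => ?_⟩
    show dG c g < δ
    linarith [dG_triangle c f g]
  | univ => exact fun _ _ => ⟨1, one_pos, Set.subset_univ _⟩
  | inter s t _ _ ihs iht =>
    intro f hf
    obtain ⟨ε₁, hε₁, h₁⟩ := ihs f hf.1
    obtain ⟨ε₂, hε₂, h₂⟩ := iht f hf.2
    exact ⟨min ε₁ ε₂, lt_min hε₁ hε₂, fun g (hg : dG f g < min ε₁ ε₂) =>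
      ⟨h₁ (show dG f g < ε₁ from hg.trans_le (min_le_left _ _)),
        h₂ (show dG f g < ε₂ from hg.trans_le (min_le_right _ _))⟩⟩
  | sUnion S _ ih =>
    rintro f ⟨s, hsS, hfs⟩
    obtain ⟨ε, hε, h⟩ := ih s hsS f hfs
    exact ⟨ε, hε, fun g hg => ⟨s, hsS, h hg⟩⟩

def hitsColumn (n : ℕ) : Set ↥Ggrp :=
  {g | ∃ p : ℕ × ℕ, p.2 = 0 ∧ ((g : Perm (ℕ × ℕ)) p).2 = n + 1}

lemma isOpen_hitsColumn (n : ℕ) : IsOpen (hitsColumn n) := by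
  refine isOpen_iff_forall_mem_open.2 fun f ⟨p, hp0, hpn⟩ => ?_
  have hwt : 0 < (wt p).toReal := ENNReal.toReal_pos (wt_ne_zero p) (wt_ne_top p)
  refine ⟨{g | dG f g < (wt p).toReal}, fun g hg => ⟨p, hp0, ?_⟩, isOpen_ball_dG f hwt, ?_⟩
  · rw [apply_eq_of_dG_lt_wt hg, hpn]
  · simpa [dG_self] using hwt

lemma exists_mem_hitsColumn_dG_lt {n : ℕ} {f : ↥Ggrp} (hf : f ∈ fixH (bSet n)) {ε : ℝ}
    (hε : 0 < ε) : ∃ g ∈ fixH (bSet n), dG f g < ε ∧ g ∈ hitsColumn n := by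
  set δ : ℝ≥0∞ := ENNReal.ofReal ε / 2
  have hδ : δ ≠ 0 := by simp [δ, hε]
  obtain ⟨p₀, hp₀, hwt₀⟩ := exists_mem_wt_lt (nrmS_column_lt_top 0).ne (column_infinite 0) hδ
  obtain ⟨p, hp, hwt⟩ := exists_mem_wt_lt (nrmS_preimage_lt_top f (nrmS_column_lt_top (n + 1))).ne
    ((column_infinite (n + 1)).preimage (by simp [(f : Perm (ℕ × ℕ)).surjective.range_eq])) hδ
  have hpn : ((f : Perm (ℕ × ℕ)) p).2 = n + 1 := hp
  have hp₀b : ∀ k < n, (bElt k : (ℕ × ℕ) → ZMod 2) p₀ = 0 := fun k _ => by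
    rw [bElt_apply, if_neg (by rw [show p₀.2 = 0 from hp₀]; omega)]
  have hpb : ∀ k < n, (bElt k : (ℕ × ℕ) → ZMod 2) p = 0 := fun k hk => by
    have := apply_inv_of_mem_fixH hf ⟨k, hk, rfl⟩ ((f : Perm (ℕ × ℕ)) p)
    rw [Perm.inv_eq_iff_eq.2 rfl] at this
    rw [this, bElt_apply, if_neg (by omega)]
  have hs : swapG p₀ p ∈ fixH (bSet n) := swapG_mem_fixH fun _ ⟨k, hk, hc⟩ => by
    rw [hc, hp₀b k hk, hpb k hk]
  refine ⟨f * swapG p₀ p, mul_mem hf hs, ?_, p₀, hp₀, ?_⟩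
  · have hlt : nrmS (suppP (swap p₀ p)) < ENNReal.ofReal ε :=
      (nrmS_suppP_swap_le p₀ p).trans_lt
        ((ENNReal.add_lt_add hwt₀ hwt).trans_eq (ENNReal.add_halves _))
    rw [dG_mul_right, ← ENNReal.toReal_ofReal hε.le]
    exact ENNReal.toReal_strict_mono ENNReal.ofReal_ne_top hlt
  · show ((f : Perm (ℕ × ℕ)) (swap p₀ p p₀)).2 = n + 1
    rw [swap_apply_left, hpn]

lemma dense_hitsColumn (n : ℕ) :
    Dense {g : ↥(fixH (bSet n)) | (g : ↥Ggrp) ∈ hitsColumn n} := by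
  refine dense_iff_inter_open.2 fun U hU ⟨f, hfU⟩ => ?_
  obtain ⟨V, hV, rfl⟩ := isOpen_induced_iff.1 hU
  obtain ⟨ε, hε, hball⟩ := exists_ball_subset_of_isOpen hV f hfU
  obtain ⟨g, hg, hfg, hhit⟩ := exists_mem_hitsColumn_dG_lt f.2 hε
  exact ⟨⟨g, hg⟩, hball hfg, hhit⟩

lemma notMem_hitsColumn_of_actGH_eq {n : ℕ} {g h : ↥Ggrp} {C : Set ↥Hgrp} (hC : bElt n ∈ C)
    (hh : h ∈ fixH C) (hgh : actGH h aElt = actGH g aElt) : g ∉ hitsColumn n := by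
  rintro ⟨p, hp0, hpn⟩
  set q := (g : Perm (ℕ × ℕ)) p
  have hbq : ((h : Perm (ℕ × ℕ))⁻¹ q).2 = n + 1 := by
    have := apply_inv_of_mem_fixH hh hC q
    rw [bElt_apply, bElt_apply, if_pos hpn] at this
    by_contra hc
    rw [if_neg hc] at this
    exact zero_ne_one this
  have := congrFun (congrArg Subtype.val hgh) q
  rw [actGH_apply, actGH_apply, Perm.inv_eq_iff_eq.2 rfl, aElt_apply, aElt_apply, hbq, hp0] at this
  simp at this

lemma not_NMIndepH_bSet (n : ℕ) : ¬ NMIndepH aElt (bSet n) (bSet (n + 1)) := by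
  rw [NMIndepH, not_not, IsMeagre]
  refine Filter.mem_of_superset
    (residual_of_dense_open ((isOpen_hitsColumn n).preimage continuous_subtype_val)
      (dense_hitsColumn n)) ?_
  rintro g hhit ⟨h, hh, hgh⟩
  exact notMem_hitsColumn_of_actGH_eq (Or.inr ⟨n, n.lt_succ_self, rfl⟩) hh hgh hhit

end Topology

lemma bSet_subset_succ (n : ℕ) : bSet n ⊆ bSet (n + 1) := by
  rintro x ⟨k, hk, rfl⟩
  exact ⟨k, by omega, rfl⟩

lemma bSet_finite (n : ℕ) : (bSet n).Finite :=
  ((Set.finite_Iio n).image bElt).subset fun _ ⟨k, hk, hx⟩ => ⟨k, hk, hx.symm⟩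

lemma bSet_zero : bSet 0 = ∅ :=
  Set.eq_empty_iff_forall_notMem.2 fun _ ⟨_, hk, _⟩ => Nat.not_lt_zero _ hk

lemma NMgeH_aElt_bSet (α : Ordinal) : ∀ n, NMgeH aElt α (bSet n) := by
  induction α using Ordinal.limitRecOn with
  | zero =>
    intro n
    rw [NMgeH, Ordinal.limitRecOn_zero]
    trivial
  | add_one o ih =>
    intro n
    rw [NMgeH, Ordinal.limitRecOn_add_one]
    exact ⟨bSet (n + 1), bSet_subset_succ n, bSet_finite _, not_NMIndepH_bSet n, ih (n + 1)⟩
  | limit o ho ih =>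
    intro n
    rw [NMgeH, Ordinal.limitRecOn_limit _ _ _ _ ho]
    exact fun β hβ => ih β hβ n

/-- The Polish `G`-group `(H,G)` is not nm-stable: for `a ∈ H` given by
`a (i,j) = 1` iff `j = 0`, one has `NM(a/∅) = ∞`, i.e. `NM(a/∅) ≥ α` for every ordinal
`α`. -/
theorem statement19 : ∀ α : Ordinal, NMgeH aElt α ∅ := by
  intro α
  rw [← bSet_zero]
  exact NMgeH_aElt_bSet α 0
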